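/- Gordan's theorem: for any real m × n matrix A, exactly one of the following holds: (1) there exists v ∈ ℝᵐ with every entry of vᵀA strictly positive; (2) there exists a nonzero u ∈ ℝⁿ with u ≥ 0 componentwise and A·u = 0. -/

import Mathlib

/-!
Both alternatives cannot hold, since `(vᵀA) u = vᵀ (A u)`. If the second fails, then `0` does not
lie in the image `A(Δ)` of the standard simplex, which is compact and convex; a hyperplane
separating `0` from `A(Δ)` is given by some `v`, and `vᵀA` is positive on the columns `A eⱼ ∈ A(Δ)`.
-/

open Matrix

lemma dotProduct_pos_of_pos_of_nonneg {R ι : Type*} [Fintype ι] [Semiring R] [PartialOrder R]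
    [IsStrictOrderedRing R] {w u : ι → R} (hw : ∀ i, 0 < w i) (hu : 0 ≤ u) (hu₀ : u ≠ 0) :
    0 < w ⬝ᵥ u := by
  obtain ⟨i, hi⟩ := Function.ne_iff.mp hu₀
  exact Finset.sum_pos' (fun k _ => mul_nonneg (hw k).le (hu k))
    ⟨i, Finset.mem_univ i, mul_pos (hw i) ((hu i).lt_of_ne' hi)⟩

namespace Matrix

variable {m n : Type*} [Fintype m] [Fintype n] (A : Matrix m n ℝ)

lemma eq_zero_of_nonneg_of_mulVec_eq_zero_of_pos_vecMul {v : m → ℝ} (hv : ∀ j, 0 < (v ᵥ* A) j)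
    {u : n → ℝ} (hu : 0 ≤ u) (hAu : A *ᵥ u = 0) : u = 0 := by
  by_contra hu₀
  have hpos := dotProduct_pos_of_pos_of_nonneg hv hu hu₀
  rw [← dotProduct_mulVec, hAu, dotProduct_zero] at hpos
  exact hpos.false

lemma exists_pos_vecMul_of_forall_nonneg_mulVec_eq_zero
    (hA : ∀ u : n → ℝ, 0 ≤ u → A *ᵥ u = 0 → u = 0) : ∃ v : m → ℝ, ∀ j, 0 < (v ᵥ* A) j := by
  classical
  have hconv : Convex ℝ (A.mulVecLin '' stdSimplex ℝ n) :=
    (convex_stdSimplex ℝ n).linear_image _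
  have hclosed : IsClosed (A.mulVecLin '' stdSimplex ℝ n) :=
    ((isCompact_stdSimplex ℝ n).image A.mulVecLin.continuous_of_finiteDimensional).isClosed
  have hzero : (0 : m → ℝ) ∉ A.mulVecLin '' stdSimplex ℝ n := by
    rintro ⟨u, ⟨hu, hsum⟩, hAu⟩
    simp [hA u hu hAu] at hsum
  obtain ⟨f, c, hc, hf⟩ := geometric_hahn_banach_point_closed hconv hclosed hzero
  rw [map_zero] at hc
  set v := (dotProductEquiv ℝ m).symm f.toLinearMap
  refine ⟨v, fun j => ?_⟩
  calc 0 < c := hc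
    _ < f (A *ᵥ Pi.single j 1) := hf _ ⟨_, single_mem_stdSimplex ℝ j, rfl⟩
    _ = v ⬝ᵥ A *ᵥ Pi.single j 1 := by
      rw [← dotProductEquiv_apply_apply, LinearEquiv.apply_symm_apply]; rfl
    _ = (v ᵥ* A) j := by rw [dotProduct_mulVec, dotProduct_single_one]

theorem exists_pos_vecMul_iff :
    (∃ v : m → ℝ, ∀ j, 0 < (v ᵥ* A) j) ↔ ∀ u : n → ℝ, 0 ≤ u → A *ᵥ u = 0 → u = 0 :=
  ⟨fun ⟨_, hv⟩ _ => A.eq_zero_of_nonneg_of_mulVec_eq_zero_of_pos_vecMul hv,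
    A.exists_pos_vecMul_of_forall_nonneg_mulVec_eq_zero⟩

end Matrix

theorem gordan (m n : ℕ) (A : Matrix (Fin m) (Fin n) ℝ) :
    Xor' (∃ v : Fin m → ℝ, ∀ j, 0 < Matrix.vecMul v A j)
      (∃ u : Fin n → ℝ, u ≠ 0 ∧ (∀ j, 0 ≤ u j) ∧ A.mulVec u = 0) := by
  refine xor_iff_iff_not.mpr (A.exists_pos_vecMul_iff.trans ?_)
  exact ⟨fun h ⟨u, hu₀, hu, hAu⟩ => hu₀ (h u hu hAu),
    fun h u hu hAu => by_contra fun hu₀ => h ⟨u, hu₀, hu, hAu⟩⟩
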